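/- arXiv:0811.3475 — 3 statements merged into one kernel-verified Lean document; each statement's English description precedes it below -/
import Mathlib

section
/- In a directed multigraph with distinct nonadjacent vertices s and t, if [S, S̄] is an s,t-edge cut (i.e., S contains s but not t and [S,S̄] is the set of edges from S to its complement S̄) such that s is not the tail of any edge in [S,S̄], then the set of tails of edges in [S,S̄] is an s,t-vertex cut (i.e., deleting these vertices destroys all paths from s to t). -/
/-- A directed multigraph on vertex type `V` with edge type `E`. -/
structure Multigraph (V E : Type) where
  tail : E → V
  head : E → V

namespace Multigraph

variable {V E : Type}

/-- A (directed) walk from `s` to `t`: a nonempty list of edges, consecutive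
edges compatible, starting at `s` and ending at `t`. -/
structure Walk (G : Multigraph V E) (s t : V) where
  edges : List E
  ne : edges ≠ []
  first : G.tail (edges.head ne) = s
  last : G.head (edges.getLast ne) = t
  chain : edges.Chain' fun e f => G.head e = G.tail f

namespace Walk

variable {G : Multigraph V E} {s t : V}

/-- The internal vertices of a walk: heads of all edges except the last. -/
def internals (w : G.Walk s t) : Set V :=
  {v | ∃ e ∈ w.edges.dropLast, G.head e = v}

/-- All vertices visited by a walk. -/
def vertexSet (w : G.Walk s t) : Set V :=
  {v | v = s ∨ ∃ e ∈ w.edges, G.head e = v}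

/-- The set of edges used by a walk. -/
def edgeSet (w : G.Walk s t) : Set E := {e | e ∈ w.edges}

/-- A walk is simple (a path) if it visits no vertex twice. -/
def IsSimple (w : G.Walk s t) : Prop := (s :: w.edges.map G.head).Nodup

end Walk

/-- There exist `n` pairwise internally-disjoint paths from `s` to `t`
(in a multigraph, parallel direct edges count as distinct internally-disjoint
paths, so pairwise edge-disjointness is also required). -/
def HasIntDisjoint (G : Multigraph V E) (s t : V) (n : ℕ) : Prop :=
  ∃ P : Fin n → G.Walk s t, ∀ i j, i ≠ j →
    (P i).internals ∩ (P j).internals = ∅ ∧ (P i).edgeSet ∩ (P j).edgeSet = ∅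

/-- There exist `n` pairwise edge-disjoint walks from `s` to `t`. -/
def HasEdgeDisjoint (G : Multigraph V E) (s t : V) (n : ℕ) : Prop :=
  ∃ P : Fin n → G.Walk s t, ∀ i j, i ≠ j →
    (P i).edgeSet ∩ (P j).edgeSet = ∅

/-- `A ⊆ V \ {s,t}` is an `s,t`-vertex cut: removing `A` destroys all
walks from `s` to `t`, i.e. every walk from `s` to `t` meets `A`. -/
def IsVertexCut (G : Multigraph V E) (s t : V) (A : Set V) : Prop :=
  s ∉ A ∧ t ∉ A ∧ ∀ w : G.Walk s t, ∃ v ∈ w.vertexSet, v ∈ A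

/-- There is no edge from `s` to `t`. -/
def Nonadjacent (G : Multigraph V E) (s t : V) : Prop :=
  ∀ e : E, ¬(G.tail e = s ∧ G.head e = t)

/-- The edge cut `[S, S̄]`: all edges with tail in `S` and head outside `S`. -/
def cutE (G : Multigraph V E) [Fintype E] [DecidableEq V] (S : Finset V) : Finset E :=
  Finset.univ.filter fun e => G.tail e ∈ S ∧ G.head e ∉ S

/-- `tail([S, S̄])`: the set of tails of the edges in the cut `[S, S̄]`. -/
def tailSet (G : Multigraph V E) [Fintype E] [DecidableEq V] (S : Finset V) : Finset V :=
  (G.cutE S).image G.tail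

/-- The parents of a vertex `v`. -/
def parents (G : Multigraph V E) (v : V) : Set V :=
  {u | ∃ e : E, G.tail e = u ∧ G.head e = v}

/-- The in-degree of a vertex: number of edges entering it. -/
def indeg (G : Multigraph V E) [Fintype E] [DecidableEq V] (t : V) : ℕ :=
  (Finset.univ.filter fun e => G.head e = t).card

/-- The diversity `d(v) = |Γ⁻(v) \ {s}| + |[s,v]|` of a vertex `v`
with respect to the source `s`. -/
def diversity (G : Multigraph V E) [Fintype V] [Fintype E] [DecidableEq V]
    (s v : V) : ℕ :=
  (Finset.univ.filter fun u => u ≠ s ∧ ∃ e : E, G.tail e = u ∧ G.head e = v).card +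
  (Finset.univ.filter fun e : E => G.tail e = s ∧ G.head e = v).card

/-- A multigraph is acyclic if it has no closed walk. -/
def Acyclic (G : Multigraph V E) : Prop := ∀ v : V, IsEmpty (G.Walk v v)

/-- The broadcast transformation with source `s`: every vertex `u ≠ s` is
split into `u → u⁺`, all edges into `u` are kept, and every edge out of
`u` is redirected to originate from `u⁺` (edges out of `s` are unchanged). -/
def broadcast (G : Multigraph V E) (s : V) [DecidableEq V] :
    Multigraph (V ⊕ {u : V // u ≠ s}) (E ⊕ {u : V // u ≠ s}) where
  tail := fun x => match x with
    | Sum.inl e => if h : G.tail e = s then Sum.inl s else Sum.inr ⟨G.tail e, h⟩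
    | Sum.inr u => Sum.inl u.1
  head := fun x => match x with
    | Sum.inl e => Sum.inl (G.head e)
    | Sum.inr u => Sum.inr u

/-- `hw` is the walk in the broadcast transformation corresponding to `w`:
the original edges appearing along `hw`, in order, are exactly those of `w`. -/
def Corresponds [DecidableEq V] {G : Multigraph V E} {s t : V} (w : G.Walk s t)
    (hw : (G.broadcast s).Walk (Sum.inl s) (Sum.inl t)) : Prop :=
  hw.edges.filterMap (Sum.elim some (fun _ => none)) = w.edges

/-- `v` is reachable from `s` by a walk avoiding the vertex set `A`
(in the graph `G − A`). -/
def ReachAvoid (G : Multigraph V E) (A : Set V) (s v : V) : Prop :=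
  v = s ∨ ∃ w : G.Walk s v, ∀ x ∈ w.vertexSet, x ∉ A

end Multigraph

namespace Multigraph

variable {V E : Type} {G : Multigraph V E} {s t : V}

lemma Walk.tail_mem_vertexSet (w : G.Walk s t) {e : E} (he : e ∈ w.edges) :
    G.tail e ∈ w.vertexSet := by
  obtain ⟨i, hi, rfl⟩ := List.mem_iff_getElem.mp he
  cases i with
  | zero =>
    left
    simpa [List.head_eq_getElem] using w.first
  | succ j =>
    exact Or.inr ⟨w.edges[j], List.getElem_mem _, w.chain.getElem j hi⟩

variable [Fintype E] [DecidableEq V] {S : Finset V}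

@[simp]
lemma mem_cutE {e : E} : e ∈ G.cutE S ↔ G.tail e ∈ S ∧ G.head e ∉ S := by
  simp [cutE]

lemma mem_of_mem_tailSet {v : V} (hv : v ∈ G.tailSet S) : v ∈ S := by
  obtain ⟨e, he, rfl⟩ := Finset.mem_image.mp hv
  exact (mem_cutE.mp he).1

lemma Walk.exists_mem_cutE (w : G.Walk s t) (hs : s ∈ S) (ht : t ∉ S) :
    ∃ e ∈ w.edges, e ∈ G.cutE S := by
  by_contra! hnot
  -- Without a cut edge, membership of the tail in `S` propagates along the walk.
  have hstays : w.edges.IsChain fun e f => G.tail e ∈ S → G.tail f ∈ S :=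
    w.chain.imp_of_mem_imp fun e f he _ hef htail => by
      rw [← hef]
      by_contra hhead
      exact hnot e he (mem_cutE.mpr ⟨htail, hhead⟩)
  have hall := hstays.induction (G.tail · ∈ S) _ (fun _ _ h => h)
    (fun _ => by rwa [w.first])
  have hlast := List.getLast_mem w.ne
  exact hnot _ hlast (mem_cutE.mpr ⟨hall _ hlast, by rwa [w.last]⟩)

end Multigraph

theorem stmt0_general {V E : Type} [Fintype E] [DecidableEq V]
    (G : Multigraph V E) (s t : V)
    (S : Finset V) (hsS : s ∈ S) (htS : t ∉ S)
    (hs : s ∉ G.tailSet S) :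
    G.IsVertexCut s t ↑(G.tailSet S) := by
  refine ⟨by exact_mod_cast hs, fun ht => htS (Multigraph.mem_of_mem_tailSet ht), fun w => ?_⟩
  obtain ⟨e, he, hcut⟩ := w.exists_mem_cutE hsS htS
  exact ⟨G.tail e, w.tail_mem_vertexSet he, Finset.mem_image_of_mem _ hcut⟩

/-- If `[S,S̄]` is an `s,t`-edge cut with `s` not the tail of any
cut edge, then `tail([S,S̄])` is an `s,t`-vertex cut. -/
theorem stmt0 {V E : Type} [Fintype E] [DecidableEq V]
    (G : Multigraph V E) (s t : V) (hst : s ≠ t) (hna : G.Nonadjacent s t)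
    (S : Finset V) (hsS : s ∈ S) (htS : t ∉ S)
    (hs : s ∉ G.tailSet S) :
    G.IsVertexCut s t ↑(G.tailSet S) :=
  stmt0_general G s t S hsS htS hs
end

section
/- In a directed multigraph with distinct nonadjacent vertices s and t, the maximum number of pairwise internally-disjoint directed paths from s to t equals the minimum of |tail([S, S̄])| over all s,t-edge cuts [S, S̄] such that s ∉ tail([S, S̄]). -/
/-!
Split every vertex `u ≠ s` into `u → u⁺` (the broadcast graph). A maximum unit-capacity flow
from `s` to `t` in the broadcast graph decomposes into edge-disjoint walks; they project to
internally-disjoint paths of `G`, since two of them passing through the same inner vertex `u`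
would share the edge `u → u⁺`. The vertices reachable from `s` in the residual graph of a
maximum flow span a cut with as many edges as the flow value. Charging every cut edge to a
vertex of `G` gives a vertex cut `A`; the vertices reachable from `s` in `G - A`, together with
`A`, form a set `S` with `tail([S, S̄]) ⊆ A`. Conversely, every path leaves `S` along an edge
whose tail is one of its inner vertices, so internally-disjoint paths use distinct tails.
-/

lemma Relation.ReflTransGen.exists_nodup_isChain_cons {α : Type*} {r : α → α → Prop} {a b : α}
    (h : Relation.ReflTransGen r a b) :
    ∃ l, (a :: l).Nodup ∧ (a :: l).IsChain r ∧ (a :: l).getLast (List.cons_ne_nil a l) = b := by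
  induction h using Relation.ReflTransGen.head_induction_on with
  | refl => exact ⟨[], List.nodup_singleton _, List.IsChain.singleton _, rfl⟩
  | @head a c hac _ ih =>
    obtain ⟨l, hnd, hch, rfl⟩ := ih
    by_cases ha : a ∈ c :: l
    · obtain ⟨p, q, hpq⟩ := List.append_of_mem ha
      rw [hpq] at hnd hch
      refine ⟨q, hnd.sublist (List.sublist_append_right p _), (List.isChain_append.1 hch).2.1, ?_⟩
      simp only [hpq, List.getLast_append_of_ne_nil _ (List.cons_ne_nil a q)]
    · exact ⟨c :: l, List.nodup_cons.2 ⟨ha, hnd⟩, hch.cons_cons hac, by simp⟩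

namespace Multigraph

variable {V E : Type} {G : Multigraph V E}

variable (G) in
def Joins : V → List E → V → Prop
  | a, [], b => a = b
  | a, e :: L, b => G.tail e = a ∧ Joins (G.head e) L b

@[simp] lemma joins_nil {a b : V} : G.Joins a [] b ↔ a = b := Iff.rfl

@[simp] lemma joins_cons {a b : V} {e : E} {L : List E} :
    G.Joins a (e :: L) b ↔ G.tail e = a ∧ G.Joins (G.head e) L b := Iff.rfl

lemma joins_append {a c : V} {L₁ L₂ : List E} :
    G.Joins a (L₁ ++ L₂) c ↔ ∃ b, G.Joins a L₁ b ∧ G.Joins b L₂ c := by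
  induction L₁ generalizing a with
  | nil => simp
  | cons e L₁ ih => simp [ih, and_assoc]

lemma joins_iff {a b : V} {L : List E} (hL : L ≠ []) :
    G.Joins a L b ↔ G.tail (L.head hL) = a ∧ G.head (L.getLast hL) = b ∧
      L.IsChain fun e f => G.head e = G.tail f := by
  induction L generalizing a with
  | nil => exact absurd rfl hL
  | cons e L ih =>
    rcases L with _ | ⟨f, L⟩
    · simp
    · simp only [joins_cons, ih (List.cons_ne_nil f L), List.head_cons,
        List.getLast_cons_cons, List.isChain_cons_cons]
      constructor
      · rintro ⟨h₁, h₂, h₃, h₄⟩; exact ⟨h₁, h₃, h₂.symm, h₄⟩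
      · rintro ⟨h₁, h₃, h₂, h₄⟩; exact ⟨h₁, h₂.symm, h₃, h₄⟩

lemma Joins.exists_tail_mem_head_notMem {a b : V} {L : List E} (h : G.Joins a L b)
    {S : Set V} (ha : a ∈ S) (hb : b ∉ S) : ∃ e ∈ L, G.tail e ∈ S ∧ G.head e ∉ S := by
  induction L generalizing a with
  | nil => exact absurd (h ▸ ha) hb
  | cons e L ih =>
    by_cases he : G.head e ∈ S
    · obtain ⟨f, hf, hfS⟩ := ih h.2 he
      exact ⟨f, List.mem_cons_of_mem e hf, hfS⟩
    · exact ⟨e, List.mem_cons_self, h.1 ▸ ha, he⟩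

lemma Joins.tail_eq_or_exists_mem_dropLast {a b : V} {L : List E} (h : G.Joins a L b)
    {e : E} (he : e ∈ L) : G.tail e = a ∨ ∃ f ∈ L.dropLast, G.head f = G.tail e := by
  induction L generalizing a with
  | nil => simp at he
  | cons x L ih =>
    have hL : L ≠ [] → (x :: L).dropLast = x :: L.dropLast := List.dropLast_cons_of_ne_nil
    rcases List.mem_cons.1 he with rfl | he
    · exact Or.inl h.1
    · rw [hL (List.ne_nil_of_mem he)]
      rcases ih h.2 he with h' | ⟨f, hf, hf'⟩
      · exact Or.inr ⟨x, List.mem_cons_self, h'.symm⟩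
      · exact Or.inr ⟨f, List.mem_cons_of_mem x hf, hf'⟩

lemma Joins.exists_tail_eq {a b : V} {L : List E} (h : G.Joins a L b) {e : E} (he : e ∈ L)
    (heb : G.head e ≠ b) : ∃ f ∈ L, G.tail f = G.head e := by
  induction L generalizing a with
  | nil => simp at he
  | cons x L ih =>
    rcases List.mem_cons.1 he with rfl | he
    · rcases L with _ | ⟨f, L⟩
      · exact absurd h.2 heb
      · exact ⟨f, by simp, h.2.1⟩
    · obtain ⟨f, hf, hf'⟩ := ih h.2 he
      exact ⟨f, List.mem_cons_of_mem x hf, hf'⟩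

namespace Walk

variable {s t : V}

lemma joins (w : G.Walk s t) : G.Joins s w.edges t :=
  (joins_iff w.ne).2 ⟨w.first, w.last, w.chain⟩

def ofJoins {L : List E} (h : G.Joins s L t) (hL : L ≠ []) : G.Walk s t :=
  ⟨L, hL, ((joins_iff hL).1 h).1, ((joins_iff hL).1 h).2.1, ((joins_iff hL).1 h).2.2⟩

lemma vertexSet_subset {w w' : G.Walk s t} (h : w'.edges ⊆ w.edges) :
    w'.vertexSet ⊆ w.vertexSet := by
  rintro v (rfl | ⟨e, he, rfl⟩)
  exacts [Or.inl rfl, Or.inr ⟨e, h he, rfl⟩]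

lemma tail_eq_or_mem_internals (w : G.Walk s t) {e : E} (he : e ∈ w.edges) :
    G.tail e = s ∨ G.tail e ∈ w.internals :=
  w.joins.tail_eq_or_exists_mem_dropLast he

lemma exists_edges_eq_append_of_mem_internals (w : G.Walk s t) {v : V} (hv : v ∈ w.internals) :
    ∃ (w₁ : G.Walk s v) (w₂ : G.Walk v t), w.edges = w₁.edges ++ w₂.edges := by
  obtain ⟨e, he, rfl⟩ := hv
  obtain ⟨L₁, L₂, hdrop⟩ := List.append_of_mem he
  have hsplit : w.edges = (L₁ ++ [e]) ++ (L₂ ++ [w.edges.getLast w.ne]) := by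
    simpa [hdrop] using (List.dropLast_append_getLast w.ne).symm
  have hj := w.joins
  rw [hsplit, joins_append] at hj
  obtain ⟨b, hj₁, hj₂⟩ := hj
  obtain ⟨c, -, -, rfl⟩ := joins_append.1 hj₁
  exact ⟨ofJoins hj₁ (by simp), ofJoins hj₂ (by simp), hsplit⟩

lemma exists_subset_notMem_internals (w : G.Walk s t) :
    ∃ w' : G.Walk s t, w'.edges ⊆ w.edges ∧ s ∉ w'.internals ∧ t ∉ w'.internals := by
  induction hn : w.edges.length using Nat.strong_induction_on generalizing w with
  | _ n ih =>
  by_cases h : s ∈ w.internals ∨ t ∈ w.internals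
  · obtain ⟨w', hsub, hlt⟩ : ∃ w' : G.Walk s t, w'.edges ⊆ w.edges ∧ w'.edges.length < n := by
      rcases h with h | h <;> obtain ⟨w₁, w₂, h⟩ := w.exists_edges_eq_append_of_mem_internals h
      · have := List.length_pos_of_ne_nil w₁.ne
        exact ⟨w₂, h ▸ List.subset_append_right _ _, by rw [← hn, h, List.length_append]; omega⟩
      · have := List.length_pos_of_ne_nil w₂.ne
        exact ⟨w₁, h ▸ List.subset_append_left _ _, by rw [← hn, h, List.length_append]; omega⟩
    obtain ⟨w'', hsub', hst⟩ := ih _ hlt w' rfl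
    exact ⟨w'', List.Subset.trans hsub' hsub, hst⟩
  · exact ⟨w, List.Subset.refl _, not_or.1 h⟩

end Walk

lemma ReachAvoid.head_of_tail {s : V} {A : Set V} (hsA : s ∉ A) {e : E}
    (he : G.ReachAvoid A s (G.tail e)) (hA : G.head e ∉ A) : G.ReachAvoid A s (G.head e) := by
  obtain ⟨L, hL, hLA⟩ : ∃ L, G.Joins s L (G.tail e) ∧ ∀ f ∈ L, G.head f ∉ A := by
    rcases he with h | ⟨w, hw⟩
    · exact ⟨[], h.symm, by simp⟩
    · exact ⟨w.edges, w.joins, fun f hf => hw _ (Or.inr ⟨f, hf, rfl⟩)⟩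
  refine Or.inr ⟨Walk.ofJoins (L := L ++ [e]) (joins_append.2 ⟨_, hL, by simp⟩) (by simp), ?_⟩
  rintro x (rfl | ⟨f, hf, rfl⟩)
  · exact hsA
  · rcases List.mem_append.1 hf with hf | hf
    · exact hLA f hf
    · exact List.mem_singleton.1 hf ▸ hA

section Cuts

variable [Fintype E] [DecidableEq V] {s t : V}

lemma HasIntDisjoint.le_card_tailSet {k : ℕ} (h : G.HasIntDisjoint s t k) {S : Finset V}
    (hs : s ∈ S) (ht : t ∉ S) (hsS : s ∉ G.tailSet S) : k ≤ (G.tailSet S).card := by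
  obtain ⟨P, hP⟩ := h
  choose e he hcross using fun i => (P i).joins.exists_tail_mem_head_notMem
    (S := (S : Set V)) hs ht
  have htail : ∀ i, G.tail (e i) ∈ G.tailSet S := fun i =>
    Finset.mem_image_of_mem _ (by simpa [cutE] using hcross i)
  have hinner : ∀ i, G.tail (e i) ∈ (P i).internals := fun i =>
    ((P i).tail_eq_or_mem_internals (he i)).resolve_left fun h => hsS (h ▸ htail i)
  calc k = (Finset.univ : Finset (Fin k)).card := by simp
    _ ≤ (G.tailSet S).card := by
      refine Finset.card_le_card_of_injOn _ (fun i _ => htail i) fun i _ j _ hij => ?_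
      by_contra hne
      have hboth : G.tail (e i) ∈ (P i).internals ∩ (P j).internals := ⟨hinner i, hij ▸ hinner j⟩
      rw [(hP i j hne).1] at hboth
      exact hboth

/-- The vertices reachable from `s` in `G - A`, together with `A`, form the required side `S`. -/
lemma IsVertexCut.exists_tailSet_subset [Fintype V] {A : Finset V}
    (hA : G.IsVertexCut s t A) (hst : s ≠ t) :
    ∃ S : Finset V, s ∈ S ∧ t ∉ S ∧ G.tailSet S ⊆ A := by
  classical
  refine ⟨Finset.univ.filter fun v => G.ReachAvoid A s v ∨ v ∈ A, by simp [ReachAvoid], ?_, ?_⟩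
  · simp only [Finset.mem_filter, Finset.mem_univ, true_and, not_or]
    refine ⟨?_, hA.2.1⟩
    rintro (h | ⟨w, hw⟩)
    · exact hst h.symm
    · obtain ⟨v, hv, hvA⟩ := hA.2.2 w
      exact hw v hv hvA
  · intro v hv
    obtain ⟨e, he, rfl⟩ := Finset.mem_image.1 hv
    simp only [cutE, Finset.mem_filter, Finset.mem_univ, true_and, not_or] at he
    obtain ⟨htail, hhead, hheadA⟩ := he
    by_contra h
    exact hhead (ReachAvoid.head_of_tail hA.1 (htail.resolve_right h) hheadA)

end Cuts

section Flow

variable [DecidableEq V]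

variable (G) in
def netOut (F : Finset E) : V → ℤ :=
  ∑ e ∈ F, (Pi.single (G.tail e) 1 - Pi.single (G.head e) 1)

variable (G) in
/-- A unit-capacity flow of value `k`, given by the set `F` of edges carrying flow. -/
def IsFlow (s t : V) (F : Finset E) (k : ℕ) : Prop :=
  G.netOut F = (k : ℤ) • (Pi.single s 1 - Pi.single t 1)

variable (G) in
/-- The residual graph of `F`: edges outside `F` forwards, edges of `F` backwards. -/
def Residual (F : Finset E) (u w : V) : Prop :=
  ∃ e, (e ∉ F ∧ G.tail e = u ∧ G.head e = w) ∨ (e ∈ F ∧ G.tail e = w ∧ G.head e = u)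

lemma netOut_apply (F : Finset E) (v : V) :
    G.netOut F v = ∑ e ∈ F, ((if v = G.tail e then 1 else 0) - if v = G.head e then 1 else 0) := by
  simp [netOut, Finset.sum_apply, Pi.single_apply]

lemma netOut_sdiff [DecidableEq E] {F M : Finset E} (h : M ⊆ F) :
    G.netOut (F \ M) = G.netOut F - G.netOut M :=
  eq_sub_of_add_eq (Finset.sum_sdiff h)

lemma netOut_toFinset [DecidableEq E] {M : List E} (hM : M.Nodup) {a b : V} (h : G.Joins a M b) :
    G.netOut M.toFinset = Pi.single a 1 - Pi.single b 1 := by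
  rw [netOut, List.sum_toFinset _ hM]
  induction M generalizing a with
  | nil => simp [show a = b from h]
  | cons e M ih =>
    rw [List.map_cons, List.sum_cons, ih (List.nodup_cons.1 hM).2 h.2, h.1, sub_add_sub_cancel]

lemma netOut_apply_nonpos {F : Finset E} {v : V} (h : ∀ e ∈ F, G.tail e ≠ v) :
    G.netOut F v ≤ 0 := by
  rw [netOut_apply]
  refine Finset.sum_nonpos fun e he => ?_
  rw [if_neg (h e he).symm]
  split_ifs <;> simp

lemma sum_netOut (F : Finset E) (T : Finset V) :
    ∑ v ∈ T, G.netOut F v =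
      ∑ e ∈ F, ((if G.tail e ∈ T then 1 else 0) - if G.head e ∈ T then 1 else 0) := by
  simp only [netOut, Finset.sum_apply, Pi.sub_apply]
  rw [Finset.sum_comm]
  simp [Finset.sum_sub_distrib, Finset.sum_pi_single']

variable {s t : V} {F : Finset E} {k : ℕ}

lemma IsFlow.le_card (hF : G.IsFlow s t F k) (hst : s ≠ t) : k ≤ F.card := by
  have h := congrFun hF s
  simp only [Pi.smul_apply, Pi.sub_apply, Pi.single_eq_same, Pi.single_eq_of_ne hst,
    smul_eq_mul, netOut_apply] at h
  have : ∑ e ∈ F, ((if s = G.tail e then 1 else 0) - if s = G.head e then 1 else 0) ≤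
      ∑ e ∈ F, (1 : ℤ) :=
    Finset.sum_le_sum fun e _ => by split_ifs <;> simp
  simp only [Finset.sum_const, nsmul_eq_mul, mul_one] at this
  omega

/-- Across a cut closed under residual steps every edge leaving is in `F` and no edge of `F`
enters, so the cut has exactly as many edges as the flow value. -/
lemma IsFlow.card_cutE [Fintype E] (hF : G.IsFlow s t F k) {T : Finset V} (hs : s ∈ T)
    (ht : t ∉ T) (hT : ∀ u w, u ∈ T → G.Residual F u w → w ∈ T) : (G.cutE T).card = k := by
  have hcut : G.cutE T = F.filter fun e => G.tail e ∈ T ∧ G.head e ∉ T := by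
    ext e
    simp only [cutE, Finset.mem_filter, Finset.mem_univ, true_and, iff_and_self]
    rintro ⟨htail, hhead⟩
    by_contra he
    exact hhead (hT _ _ htail ⟨e, Or.inl ⟨he, rfl, rfl⟩⟩)
  have hterm : ∀ e ∈ F, ((if G.tail e ∈ T then 1 else 0) - if G.head e ∈ T then 1 else 0 : ℤ) =
      if G.tail e ∈ T ∧ G.head e ∉ T then 1 else 0 := fun e he => by
    have := fun h => hT (G.head e) (G.tail e) h ⟨e, Or.inr ⟨he, rfl, rfl⟩⟩
    split_ifs <;> simp_all
  have hsum := G.sum_netOut F T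
  rw [Finset.sum_congr rfl hterm, Finset.sum_boole, ← hcut, hF] at hsum
  simp [Finset.sum_sub_distrib, ← Finset.mul_sum, Finset.sum_pi_single', hs, ht] at hsum
  exact_mod_cast hsum.symm

variable [DecidableEq E]

lemma Residual.exists_toggle {v w : V} (h : G.Residual F v w) :
    ∃ F', G.netOut F' = G.netOut F + (Pi.single v 1 - Pi.single w 1) ∧
      ∀ x y, x ≠ v → G.Residual F x y → G.Residual F' x y := by
  obtain ⟨e, ⟨he, rfl, rfl⟩ | ⟨he, rfl, rfl⟩⟩ := h
  · refine ⟨insert e F, by rw [netOut, Finset.sum_insert he, add_comm]; rfl, ?_⟩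
    rintro x y hx ⟨f, ⟨hf, rfl, rfl⟩ | ⟨hf, rfl, rfl⟩⟩
    · refine ⟨f, Or.inl ⟨?_, rfl, rfl⟩⟩
      rw [Finset.mem_insert, not_or]
      exact ⟨fun h => hx (h ▸ rfl), hf⟩
    · exact ⟨f, Or.inr ⟨Finset.mem_insert_of_mem hf, rfl, rfl⟩⟩
  · refine ⟨F.erase e, ?_, ?_⟩
    · unfold netOut
      rw [← Finset.add_sum_erase F _ he]
      abel
    rintro x y hx ⟨f, ⟨hf, rfl, rfl⟩ | ⟨hf, rfl, rfl⟩⟩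
    · exact ⟨f, Or.inl ⟨fun h => hf (Finset.mem_of_mem_erase h), rfl, rfl⟩⟩
    · exact ⟨f, Or.inr ⟨Finset.mem_erase.2 ⟨fun h => hx (h ▸ rfl), hf⟩, rfl, rfl⟩⟩

/-- The path must be simple: toggling the edge of one residual step leaves the residual steps
out of all other vertices intact. -/
lemma exists_netOut_eq_add_of_isChain {v : V} {l : List V} {F : Finset E}
    (hch : (v :: l).IsChain (G.Residual F)) (hnd : (v :: l).Nodup) :
    ∃ F', G.netOut F' = G.netOut F +
      (Pi.single v 1 - Pi.single ((v :: l).getLast (List.cons_ne_nil v l)) 1) := by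
  induction l generalizing v F with
  | nil => exact ⟨F, by simp⟩
  | cons w l ih =>
    rw [List.isChain_cons_cons] at hch
    obtain ⟨F₁, hF₁, hres⟩ := hch.1.exists_toggle
    have hv : v ∉ w :: l := (List.nodup_cons.1 hnd).1
    obtain ⟨F₂, hF₂⟩ := ih (hch.2.imp_of_mem_imp fun x y hx _ hxy =>
      hres x y (fun h => hv (h ▸ hx)) hxy) (List.nodup_cons.1 hnd).2
    refine ⟨F₂, ?_⟩
    rw [hF₂, hF₁, List.getLast_cons_cons]
    abel

variable [Fintype E]

lemma exists_isFlow_not_reflTransGen (hst : s ≠ t) :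
    ∃ k F, G.IsFlow s t F k ∧ ¬ Relation.ReflTransGen (G.Residual F) s t := by
  by_contra! h
  have hflow : ∀ k, ∃ F, G.IsFlow s t F k := by
    intro k
    induction k with
    | zero => exact ⟨∅, by simp [IsFlow, netOut]⟩
    | succ k ih =>
      obtain ⟨F, hF⟩ := ih
      obtain ⟨l, hnd, hch, hlast⟩ := (h k F hF).exists_nodup_isChain_cons
      obtain ⟨F', hF'⟩ := exists_netOut_eq_add_of_isChain hch hnd
      refine ⟨F', ?_⟩
      rw [IsFlow, hF', hF, hlast]
      push_cast
      rw [add_smul, one_smul]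
  obtain ⟨F, hF⟩ := hflow (Fintype.card E + 1)
  have := (hF.le_card hst).trans (Finset.card_le_univ F)
  omega

end Flow

section Decomposition

variable [DecidableEq V] [DecidableEq E]

lemma exists_maximal_trail (F : Finset E) {a b : V} (M : List E) (hnd : M.Nodup)
    (hMF : ∀ e ∈ M, e ∈ F) (hj : G.Joins a M b) :
    ∃ (M' : List E) (b' : V), M'.Nodup ∧ (∀ e ∈ M', e ∈ F) ∧ G.Joins a M' b' ∧
      ∀ e ∈ F, G.tail e = b' → e ∈ M' := by
  by_cases hmax : ∀ e ∈ F, G.tail e = b → e ∈ M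
  · exact ⟨M, b, hnd, hMF, hj, hmax⟩
  push Not at hmax
  obtain ⟨e, he, heb, heM⟩ := hmax
  have hnd' : (M ++ [e]).Nodup := by simpa using hnd.concat heM
  have hMF' : ∀ f ∈ M ++ [e], f ∈ F := fun f hf =>
    (List.mem_append.1 hf).elim (hMF f) fun h => List.mem_singleton.1 h ▸ he
  have hlen : (M ++ [e]).length ≤ F.card := by
    rw [← List.toFinset_card_of_nodup hnd']
    exact Finset.card_le_card fun f hf => hMF' f (List.mem_toFinset.1 hf)
  exact exists_maximal_trail F (M ++ [e]) hnd' hMF'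
    (joins_append.2 ⟨b, hj, show G.Joins b [e] (G.head e) from ⟨heb, rfl⟩⟩)
termination_by F.card - M.length
decreasing_by simp only [List.length_append, List.length_singleton] at hlen ⊢; omega

variable {s t : V} {F : Finset E} {k : ℕ}

lemma IsFlow.exists_trail (hF : G.IsFlow s t F (k + 1)) :
    ∃ M : List E, M.Nodup ∧ (∀ e ∈ M, e ∈ F) ∧ G.Joins s M t := by
  obtain ⟨M, b, hnd, hMF, hj, hmax⟩ := exists_maximal_trail (G := G) (a := s) F [] List.nodup_nil
    (by simp) rfl
  obtain rfl : b = t := by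
    by_contra hbt
    have hle : G.netOut (F \ M.toFinset) b ≤ 0 := netOut_apply_nonpos fun e he heb =>
      (Finset.mem_sdiff.1 he).2 (List.mem_toFinset.2 (hmax e (Finset.mem_sdiff.1 he).1 heb))
    rw [netOut_sdiff fun e he => hMF e (List.mem_toFinset.1 he), hF, netOut_toFinset hnd hj] at hle
    simp only [Pi.sub_apply, Pi.smul_apply, Pi.single_apply, if_neg hbt, smul_eq_mul] at hle
    split_ifs at hle <;> push_cast at hle <;> omega
  exact ⟨M, hnd, hMF, hj⟩

lemma IsFlow.exists_edgeDisjoint_walks (hF : G.IsFlow s t F k) (hst : s ≠ t) :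
    ∃ P : Fin k → G.Walk s t,
      (∀ i, (P i).edgeSet ⊆ F) ∧ Pairwise fun i j => Disjoint (P i).edgeSet (P j).edgeSet := by
  induction k generalizing F with
  | zero => exact ⟨Fin.elim0, fun i => i.elim0, fun i => i.elim0⟩
  | succ k ih =>
    obtain ⟨M, hnd, hMF, hj⟩ := hF.exists_trail
    have hsub : M.toFinset ⊆ F := fun e he => hMF e (List.mem_toFinset.1 he)
    obtain ⟨P, hPF, hP⟩ := ih (F := F \ M.toFinset) (by
      rw [IsFlow, netOut_sdiff hsub, hF, netOut_toFinset hnd hj]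
      push_cast
      rw [add_smul, one_smul, add_sub_cancel_right])
    have hM : M ≠ [] := by rintro rfl; exact hst hj
    let w : G.Walk s t := Walk.ofJoins hj hM
    have hwP : ∀ i, Disjoint w.edgeSet (P i).edgeSet := fun i =>
      Set.disjoint_left.2 fun e he he' =>
        (Finset.mem_sdiff.1 (hPF i he')).2 (List.mem_toFinset.2 he)
    refine ⟨Fin.cons w P, fun i => ?_, fun i j hij => ?_⟩
    · refine Fin.cases (fun e he => hMF e he) (fun i => ?_) i
      exact (hPF i).trans (by simp)
    · induction i using Fin.cases <;> induction j using Fin.cases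
      · exact absurd rfl hij
      · exact hwP _
      · exact (hwP _).symm
      · exact hP (fun h => hij (congrArg Fin.succ h))

lemma IsFlow.hasEdgeDisjoint (hF : G.IsFlow s t F k) (hst : s ≠ t) : G.HasEdgeDisjoint s t k := by
  obtain ⟨P, -, hP⟩ := hF.exists_edgeDisjoint_walks hst
  exact ⟨P, fun i j hij => Set.disjoint_iff_inter_eq_empty.1 (hP hij)⟩

end Decomposition

section Broadcast

variable [DecidableEq V] {s t : V}

lemma Joins.filterMap_broadcast {a b : V ⊕ {u : V // u ≠ s}} {L : List (E ⊕ {u : V // u ≠ s})}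
    (h : (G.broadcast s).Joins a L b) :
    G.Joins (Sum.elim id Subtype.val a) (L.filterMap (Sum.elim some fun _ => none))
      (Sum.elim id Subtype.val b) := by
  induction L generalizing a with
  | nil => exact congrArg _ h
  | cons x L ih =>
    obtain ⟨rfl, h⟩ := h
    rcases x with e | u
    · refine ⟨?_, ih h⟩
      by_cases he : G.tail e = s <;> simp [broadcast, he]
    · exact ih (a := Sum.inr u) h

lemma exists_corresponds (hst : s ≠ t)
    (hw : (G.broadcast s).Walk (Sum.inl s) (Sum.inl t)) : ∃ w : G.Walk s t, Corresponds w hw := by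
  have h := hw.joins.filterMap_broadcast
  refine ⟨Walk.ofJoins h fun hnil => hst ?_, rfl⟩
  rwa [hnil] at h

lemma inr_mem_edges_of_inl_mem (hw : (G.broadcast s).Walk (Sum.inl s) (Sum.inl t)) {e : E}
    (he : Sum.inl e ∈ hw.edges) (hs : G.head e ≠ s) (ht : G.head e ≠ t) :
    Sum.inr ⟨G.head e, hs⟩ ∈ hw.edges := by
  obtain ⟨f, hf, hfe⟩ := hw.joins.exists_tail_eq he fun h => ht (Sum.inl_injective h)
  rcases f with f | u
  · by_cases hf' : G.tail f = s <;> simp [broadcast, hf'] at hfe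
    exact absurd hfe.symm hs
  · obtain rfl : u = ⟨G.head e, hs⟩ := Subtype.ext (Sum.inl_injective hfe)
    exact hf

lemma HasEdgeDisjoint.hasIntDisjoint_of_broadcast (hst : s ≠ t) {k : ℕ}
    (h : (G.broadcast s).HasEdgeDisjoint (Sum.inl s) (Sum.inl t) k) : G.HasIntDisjoint s t k := by
  obtain ⟨P, hP⟩ := h
  have hpath : ∀ i, ∃ w : G.Walk s t, (∀ e ∈ w.edges, Sum.inl e ∈ (P i).edges) ∧
      s ∉ w.internals ∧ t ∉ w.internals := fun i => by
    obtain ⟨w, hw⟩ := exists_corresponds hst (P i)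
    obtain ⟨w', hsub, hs, ht⟩ := w.exists_subset_notMem_internals
    refine ⟨w', fun e he => ?_, hs, ht⟩
    simpa [← show _ = w.edges from hw] using hsub he
  choose Q hQ hQs hQt using hpath
  have hsplit : ∀ i {v} (hv : v ∈ (Q i).internals) (hs : v ≠ s),
      Sum.inr ⟨v, hs⟩ ∈ (P i).edges := by
    rintro i v ⟨e, he, rfl⟩ hs
    exact inr_mem_edges_of_inl_mem (P i) (hQ i e (List.dropLast_subset _ he)) hs
      fun h => hQt i ⟨e, he, h⟩
  refine ⟨Q, fun i j hij => ⟨Set.eq_empty_of_forall_notMem ?_, Set.eq_empty_of_forall_notMem ?_⟩⟩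
  · rintro v ⟨hvi, hvj⟩
    have hs : v ≠ s := fun h => hQs i (h ▸ hvi)
    have hboth : Sum.inr ⟨v, hs⟩ ∈ (P i).edgeSet ∩ (P j).edgeSet :=
      ⟨hsplit i hvi hs, hsplit j hvj hs⟩
    rwa [hP i j hij] at hboth
  · rintro e ⟨hei, hej⟩
    have hboth : Sum.inl e ∈ (P i).edgeSet ∩ (P j).edgeSet := ⟨hQ i e hei, hQ j e hej⟩
    rwa [hP i j hij] at hboth

variable (G s) in
/-- The vertex of `G` charged for an edge of the broadcast graph: `u` for `u → u⁺` and for an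
edge leaving `u⁺`, the head for an edge leaving `s`. -/
def cutVertex : E ⊕ {u : V // u ≠ s} → V :=
  Sum.elim (fun e => if G.tail e = s then G.head e else G.tail e) Subtype.val

/-- Erasing `t` is harmless: it is only charged for edges leaving `t⁺`, which no path avoiding
`t` in its interior uses. -/
lemma isVertexCut_erase_image_cutVertex [Fintype V] [Fintype E] (hna : G.Nonadjacent s t)
    {T : Finset (V ⊕ {u : V // u ≠ s})} (hs : Sum.inl s ∈ T) (ht : Sum.inl t ∉ T) :
    G.IsVertexCut s t ↑((((G.broadcast s).cutE T).image (G.cutVertex s)).erase t) := by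
  refine ⟨fun hs' => ?_, by simp, fun w => ?_⟩
  · obtain ⟨x, hx, hxs⟩ := Finset.mem_image.1 (Finset.mem_of_mem_erase hs')
    simp only [cutE, Finset.mem_filter, Finset.mem_univ, true_and] at hx
    rcases x with e | u
    · by_cases he : G.tail e = s <;> simp_all [cutVertex, broadcast]
    · exact u.2 hxs
  obtain ⟨w', hsub, -, htw'⟩ := w.exists_subset_notMem_internals
  suffices ∃ x ∈ (G.broadcast s).cutE T, G.cutVertex s x ∈ w'.vertexSet ∧ G.cutVertex s x ≠ t by
    obtain ⟨x, hx, hxw, hxt⟩ := this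
    exact ⟨_, Walk.vertexSet_subset hsub hxw,
      Finset.mem_erase.2 ⟨hxt, Finset.mem_image_of_mem _ hx⟩⟩
  obtain ⟨e, he, hte, hhe⟩ := w'.joins.exists_tail_mem_head_notMem
    (S := {u | Sum.inl u ∈ T}) hs ht
  simp only [Set.mem_ofPred_eq] at hte hhe
  by_cases hes : G.tail e = s
  · refine ⟨Sum.inl e, by simp [cutE, broadcast, hes, hs, hhe], ?_, ?_⟩ <;>
      simp only [cutVertex, Sum.elim_inl, if_pos hes]
    exacts [Or.inr ⟨e, he, rfl⟩, fun h => hna e ⟨hes, h⟩]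
  have hin := (w'.tail_eq_or_mem_internals he).resolve_left hes
  have hmem : G.tail e ∈ w'.vertexSet := by
    obtain ⟨f, hf, hfe⟩ := hin
    exact Or.inr ⟨f, List.dropLast_subset _ hf, hfe⟩
  have hne : G.tail e ≠ t := fun h => htw' (h ▸ hin)
  by_cases hplus : (Sum.inr ⟨G.tail e, hes⟩ : V ⊕ {u : V // u ≠ s}) ∈ T
  · refine ⟨Sum.inl e, by simp [cutE, broadcast, hes, hplus, hhe], ?_⟩
    simpa [cutVertex, hes] using ⟨hmem, hne⟩
  · exact ⟨Sum.inr ⟨G.tail e, hes⟩, by simp [cutE, broadcast, hte, hplus], hmem, hne⟩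

end Broadcast

end Multigraph

/-- For nonadjacent `s, t`, the maximum number of pairwise
internally-disjoint `s`-`t` paths equals the minimum of `|tail([S,S̄])|` over
all `s,t`-edge cuts `[S,S̄]` with `s ∉ tail([S,S̄])`. -/
theorem stmt2 {V E : Type} [Fintype V] [Fintype E] [DecidableEq V]
    (G : Multigraph V E) (s t : V) (hst : s ≠ t) (hna : G.Nonadjacent s t) :
    ∃ n : ℕ,
      (G.HasIntDisjoint s t n ∧ ∀ k, G.HasIntDisjoint s t k → k ≤ n) ∧
      (∃ S : Finset V, s ∈ S ∧ t ∉ S ∧ s ∉ G.tailSet S ∧ (G.tailSet S).card = n) ∧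
      (∀ S : Finset V, s ∈ S → t ∉ S → s ∉ G.tailSet S → n ≤ (G.tailSet S).card) := by
  classical
  have hst' : (Sum.inl s : V ⊕ {u : V // u ≠ s}) ≠ Sum.inl t := Sum.inl_injective.ne hst
  obtain ⟨k, F, hF, hnot⟩ := (G.broadcast s).exists_isFlow_not_reflTransGen hst'
  have hk : G.HasIntDisjoint s t k := (hF.hasEdgeDisjoint hst').hasIntDisjoint_of_broadcast hst
  let T := Finset.univ.filter (Relation.ReflTransGen ((G.broadcast s).Residual F) (Sum.inl s))
  have hsT : Sum.inl s ∈ T := by simp [T, Relation.ReflTransGen.refl]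
  have htT : Sum.inl t ∉ T := by simpa [T] using hnot
  have hcut : ((G.broadcast s).cutE T).card = k := hF.card_cutE hsT htT fun u w hu huw =>
    Finset.mem_filter.2 ⟨Finset.mem_univ w, (Finset.mem_filter.1 hu).2.tail huw⟩
  have hA := Multigraph.isVertexCut_erase_image_cutVertex hna hsT htT
  obtain ⟨S, hsS, htS, hSA⟩ := hA.exists_tailSet_subset hst
  have hsTail : s ∉ G.tailSet S := fun h => hA.1 (hSA h)
  have hcard : (G.tailSet S).card ≤ k := hcut ▸ (Finset.card_le_card hSA).trans
    (Finset.card_erase_le.trans Finset.card_image_le)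
  exact ⟨k, ⟨hk, fun j hj => (hj.le_card_tailSet hsS htS hsTail).trans hcard⟩,
    ⟨S, hsS, htS, hsTail, hcard.antisymm (hk.le_card_tailSet hsS htS hsTail)⟩,
    fun S' hs ht hsS' => hk.le_card_tailSet hs ht hsS'⟩
end

section
/- Let G be a finite directed acyclic multigraph with source s such that every vertex v ≠ s has diversity d(v) ≥ d. Then for every vertex t ≠ s (including vertices adjacent to s), the maximum number of pairwise internally-disjoint directed paths from s to t (where paths consisting of a single edge from s to t are counted, and parallel s→t edges count as distinct internally-disjoint paths) is at least d. -/
/-!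
Take all direct edges `s → t` together with `d - |[s,t]|` parents `p ≠ s` of `t`, which exist
because `d(t) ≥ d`. It suffices to find walks from `s` to these parents that are pairwise
internally disjoint and do not pass through another parent: appending the edges `p → t` gives the
required paths, and in an acyclic graph internally disjoint walks with distinct last edges are
edge-disjoint.

Such a fan onto any set `T` of at most `d` vertices other than `s` exists by induction on
`∑ v ∈ T, (#ancestors v + 1)`. Remove the target `t` with the most ancestors, which lies on no
walk to another target. If there is an edge `s → t`, it is the walk to `t`. Otherwise
`d(t) ≥ d > |T \ {t}|` yields a parent `p ≠ s` of `t` outside `T \ {t}`, and the walk to `p` in a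
fan onto `(T \ {t}) ∪ {p}` is extended by the edge `p → t`.
-/

namespace Multigraph

variable {V E : Type} {G : Multigraph V E}

namespace Walk

variable {s t u v w : V}

def single (e : E) (hs : G.tail e = s) (ht : G.head e = t) : G.Walk s t :=
  ⟨[e], List.cons_ne_nil e [], hs, ht, List.isChain_singleton e⟩

def append (p : G.Walk u v) (q : G.Walk v w) : G.Walk u w where
  edges := p.edges ++ q.edges
  ne := by simp [p.ne]
  first := by rw [List.head_append_of_ne_nil p.ne]; exact p.first
  last := by rw [List.getLast_append_of_ne_nil _ q.ne]; exact q.last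
  chain := p.chain.append q.chain fun x hx y hy => by
    rw [List.getLast?_eq_some_getLast p.ne, Option.mem_some_iff] at hx
    rw [List.head?_eq_some_head q.ne, Option.mem_some_iff] at hy
    rw [← hx, ← hy, p.last, q.first]

def concat (p : G.Walk u v) (e : E) (hv : G.tail e = v) (hw : G.head e = w) : G.Walk u w :=
  p.append (single e hv hw)

def lastEdge (p : G.Walk u v) : E := p.edges.getLast p.ne

lemma head_lastEdge (p : G.Walk u v) : G.head p.lastEdge = v := p.last

@[simp] lemma internals_single (e : E) (hs : G.tail e = s) (ht : G.head e = t) :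
    (single e hs ht).internals = ∅ := by
  simp [internals, single]

@[simp] lemma lastEdge_single (e : E) (hs : G.tail e = s) (ht : G.head e = t) :
    (single e hs ht).lastEdge = e := rfl

@[simp] lemma lastEdge_concat (p : G.Walk u v) (e : E) (hv : G.tail e = v) (hw : G.head e = w) :
    (p.concat e hv hw).lastEdge = e := by
  simp [lastEdge, concat, append, single]

@[simp] lemma internals_concat (p : G.Walk u v) (e : E) (hv : G.tail e = v)
    (hw : G.head e = w) : (p.concat e hv hw).internals = insert v p.internals := by
  ext x
  simp only [internals, concat, append, single, List.dropLast_concat, Set.mem_ofPred_eq,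
    Set.mem_insert_iff]
  conv_lhs => rw [← p.edges.dropLast_append_getLast p.ne]
  simp only [List.mem_append, List.mem_singleton, or_and_right, exists_or, exists_eq_left]
  rw [show G.head (p.edges.getLast p.ne) = v from p.last, or_comm, eq_comm]

lemma mem_dropLast_or_eq_lastEdge (p : G.Walk u v) {f : E} (hf : f ∈ p.edgeSet) :
    f ∈ p.edges.dropLast ∨ f = p.lastEdge := by
  rw [edgeSet, Set.mem_ofPred_eq, ← p.edges.dropLast_append_getLast p.ne] at hf
  simpa [lastEdge] using hf

lemma nonempty_walk_of_mem_internals (p : G.Walk u v) {x : V} (hx : x ∈ p.internals) :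
    Nonempty (G.Walk x v) := by
  obtain ⟨e, he, rfl⟩ := hx
  obtain ⟨l₁, l₂, hl⟩ := List.append_of_mem he
  have hedges : p.edges = l₁ ++ e :: (l₂ ++ [p.lastEdge]) := by
    rw [← p.edges.dropLast_append_getLast p.ne, hl]; simp [lastEdge]
  have hchain : (l₁ ++ e :: (l₂ ++ [p.lastEdge])).IsChain _ := hedges ▸ p.chain
  obtain ⟨-, hsuffix⟩ := List.isChain_split.1 hchain
  refine ⟨⟨l₂ ++ [p.lastEdge], by simp, ?_, by simpa using p.head_lastEdge, hsuffix.tail⟩⟩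
  exact (hsuffix.rel_head? (List.head?_eq_some_head _)).symm

end Walk

lemma Acyclic.notMem_internals (hG : G.Acyclic) {u v : V} (p : G.Walk u v) : v ∉ p.internals :=
  fun h => (hG v).false (p.nonempty_walk_of_mem_internals h).some

lemma Acyclic.disjoint_edgeSet (hG : G.Acyclic) {s t : V} {p q : G.Walk s t}
    (hint : Disjoint p.internals q.internals) (hlast : p.lastEdge ≠ q.lastEdge) :
    Disjoint p.edgeSet q.edgeSet := by
  refine Set.disjoint_left.2 fun f hp hq => ?_
  rcases p.mem_dropLast_or_eq_lastEdge hp with hp | rfl <;>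
    rcases q.mem_dropLast_or_eq_lastEdge hq with hq | hq
  · exact Set.disjoint_left.1 hint ⟨f, hp, rfl⟩ ⟨f, hq, rfl⟩
  · exact hG.notMem_internals p ⟨f, hp, hq ▸ q.head_lastEdge⟩
  · exact hG.notMem_internals q ⟨_, hq, p.head_lastEdge⟩
  · exact hlast hq

lemma HasIntDisjoint.mono {s t : V} {m n : ℕ} (h : G.HasIntDisjoint s t n) (hmn : m ≤ n) :
    G.HasIntDisjoint s t m := by
  obtain ⟨P, hP⟩ := h
  exact ⟨fun i => P (Fin.castLE hmn i), fun i j hij => hP _ _ (by simpa [Fin.ext_iff] using hij)⟩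

lemma Acyclic.hasIntDisjoint {ι : Type*} [Fintype ι] (hG : G.Acyclic) {s t : V}
    (P : ι → G.Walk s t) (hint : Pairwise fun i j => Disjoint (P i).internals (P j).internals)
    (hlast : Function.Injective fun i => (P i).lastEdge) :
    G.HasIntDisjoint s t (Fintype.card ι) := by
  let σ := (Fintype.equivFin ι).symm
  refine ⟨fun i => P (σ i), fun i j hij => ?_⟩
  have hσ : σ i ≠ σ j := σ.injective.ne hij
  exact ⟨Set.disjoint_iff_inter_eq_empty.1 (hint hσ),
    Set.disjoint_iff_inter_eq_empty.1 (hG.disjoint_edgeSet (hint hσ) (hlast.ne hσ))⟩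

noncomputable def numAncestors (G : Multigraph V E) (v : V) : ℕ :=
  {u | Nonempty (G.Walk u v)}.ncard

lemma Acyclic.numAncestors_lt [Finite V] (hG : G.Acyclic) {u v : V} (p : G.Walk u v) :
    G.numAncestors u < G.numAncestors v :=
  Set.ncard_lt_ncard ⟨fun _ ⟨q⟩ => ⟨q.append p⟩, fun h => (hG u).false (h ⟨p⟩).some⟩

lemma Acyclic.numAncestors_lt_of_mem_internals [Finite V] (hG : G.Acyclic) {u v x : V}
    (p : G.Walk u v) (hx : x ∈ p.internals) : G.numAncestors x < G.numAncestors v :=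
  hG.numAncestors_lt (p.nonempty_walk_of_mem_internals hx).some

def nonSourceParents [Fintype V] [Fintype E] [DecidableEq V] (G : Multigraph V E) (s v : V) :
    Finset V :=
  Finset.univ.filter fun u => u ≠ s ∧ ∃ e : E, G.tail e = u ∧ G.head e = v

def directEdges [Fintype E] [DecidableEq V] (G : Multigraph V E) (s v : V) : Finset E :=
  Finset.univ.filter fun e : E => G.tail e = s ∧ G.head e = v

@[simp] lemma mem_nonSourceParents [Fintype V] [Fintype E] [DecidableEq V] {s v u : V} :
    u ∈ G.nonSourceParents s v ↔ u ≠ s ∧ ∃ e : E, G.tail e = u ∧ G.head e = v := by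
  simp [nonSourceParents]

@[simp] lemma mem_directEdges [Fintype E] [DecidableEq V] {s v : V} {e : E} :
    e ∈ G.directEdges s v ↔ G.tail e = s ∧ G.head e = v := by
  simp [directEdges]

lemma diversity_eq [Fintype V] [Fintype E] [DecidableEq V] (s v : V) :
    G.diversity s v = (G.nonSourceParents s v).card + (G.directEdges s v).card := rfl

lemma Nonadjacent.exists_parent_notMem [Fintype V] [Fintype E] [DecidableEq V] {s v : V}
    (h : G.Nonadjacent s v) {A : Finset V} (hA : A.card < G.diversity s v) :
    ∃ u ∉ A, u ≠ s ∧ ∃ e : E, G.tail e = u ∧ G.head e = v := by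
  have hD : G.directEdges s v = ∅ := Finset.eq_empty_of_forall_notMem fun e he =>
    h e (mem_directEdges.1 he)
  rw [diversity_eq, hD, Finset.card_empty, add_zero] at hA
  obtain ⟨u, hu, huA⟩ := Finset.exists_mem_notMem_of_card_lt_card hA
  exact ⟨u, huA, mem_nonSourceParents.1 hu⟩

structure IsFan {s : V} (T : Finset V) (P : ∀ v ∈ T, G.Walk s v) : Prop where
  notMem_internals : ∀ u hu v, v ∈ T → v ∉ (P u hu).internals
  disjoint_internals : ∀ u hu v hv, u ≠ v → Disjoint (P u hu).internals (P v hv).internals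

namespace IsFan

variable {s : V} {T : Finset V} {P : ∀ v ∈ T, G.Walk s v}

lemma of_empty (P : ∀ v ∈ (∅ : Finset V), G.Walk s v) : IsFan ∅ P :=
  ⟨fun _ hu => absurd hu (Finset.notMem_empty _), fun _ hu => absurd hu (Finset.notMem_empty _)⟩

lemma restrict (hP : IsFan T P) {T' : Finset V} (h : T' ⊆ T) :
    IsFan T' fun v hv => P v (h hv) :=
  ⟨fun u hu v hv => hP.notMem_internals u (h hu) v (h hv),
    fun u hu v hv => hP.disjoint_internals u (h hu) v (h hv)⟩

lemma exists_of_erase [DecidableEq V] {t : V} (ht : t ∈ T) {P : ∀ v ∈ T.erase t, G.Walk s v}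
    (hP : IsFan (T.erase t) P) (W : G.Walk s t) (hW : ∀ v ∈ T, v ∉ W.internals)
    (htP : ∀ u hu, t ∉ (P u hu).internals)
    (hWP : ∀ u hu, Disjoint W.internals (P u hu).internals) :
    ∃ Q : ∀ v ∈ T, G.Walk s v, IsFan T Q := by
  refine ⟨fun v hv => if h : v = t then h ▸ W else P v (Finset.mem_erase.2 ⟨h, hv⟩), ?_, ?_⟩
  · intro u hu v hv
    by_cases hut : u = t
    · subst hut
      simpa using hW v hv
    by_cases hvt : v = t
    · subst hvt
      simpa [hut] using htP u _
    · simpa [hut] using hP.notMem_internals u _ v (Finset.mem_erase.2 ⟨hvt, hv⟩)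
  · intro u hu v hv huv
    by_cases hut : u = t <;> by_cases hvt : v = t
    · exact absurd (hut.trans hvt.symm) huv
    · subst hut
      simpa [hvt] using hWP v _
    · subst hvt
      simpa [hut] using (hWP u _).symm
    · simpa [hut, hvt] using hP.disjoint_internals u _ v _ huv

lemma disjoint_internals_concat (hP : IsFan T P) {u v w : V} (hu : u ∈ T) (hv : v ∈ T)
    (huv : u ≠ v) (e f : E) (heu : G.tail e = u) (hew : G.head e = w) (hfv : G.tail f = v)
    (hfw : G.head f = w) :
    Disjoint ((P u hu).concat e heu hew).internals ((P v hv).concat f hfv hfw).internals := by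
  simp only [Walk.internals_concat, Set.disjoint_insert_left, Set.disjoint_insert_right,
    Set.mem_insert_iff, not_or]
  exact ⟨⟨huv.symm, hP.notMem_internals u hu v hv⟩, hP.notMem_internals v hv u hu,
    hP.disjoint_internals u hu v hv huv⟩

end IsFan

theorem Acyclic.exists_isFan [Fintype V] [Fintype E] [DecidableEq V] (hG : G.Acyclic) {s : V}
    {d : ℕ} (hdiv : ∀ v, v ≠ s → d ≤ G.diversity s v) (T : Finset V) (hsT : s ∉ T)
    (hTd : T.card ≤ d) : ∃ P : ∀ v ∈ T, G.Walk s v, IsFan T P := by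
  induction hn : ∑ v ∈ T, (G.numAncestors v + 1) using Nat.strong_induction_on
    generalizing T with
  | _ n ih =>
  subst hn
  rcases T.eq_empty_or_nonempty with rfl | hne
  · exact ⟨fun v hv => absurd hv (Finset.notMem_empty v), IsFan.of_empty _⟩
  obtain ⟨t, ht, hmax⟩ := T.exists_max_image G.numAncestors hne
  have hsum := Finset.sum_erase_add T (fun v => G.numAncestors v + 1) ht
  have hcard := Finset.card_erase_of_mem ht
  have hTpos := Finset.card_pos.2 hne
  have hsT' : s ∉ T.erase t := fun h => hsT (Finset.mem_of_mem_erase h)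
  -- `t` has the most ancestors in `T`, so no walk to another target passes through it
  have hnotMem : ∀ {u} (p : G.Walk s u), G.numAncestors u ≤ G.numAncestors t →
      t ∉ p.internals :=
    fun p hu h => (hG.numAncestors_lt_of_mem_internals p h).not_ge hu
  have hnotMem_erase : ∀ {P : ∀ v ∈ T.erase t, G.Walk s v} (u) (hu : u ∈ T.erase t),
      t ∉ (P u hu).internals :=
    fun u hu => hnotMem _ (hmax u (Finset.mem_of_mem_erase hu))
  by_cases hadj : G.Nonadjacent s t
  · have hlt : (T.erase t).card < G.diversity s t := by
      have := hdiv t fun h => hsT (h ▸ ht)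
      omega
    obtain ⟨p, hp_erase, hps, e, hep, het⟩ := hadj.exists_parent_notMem hlt
    have hpt : G.numAncestors p < G.numAncestors t := hG.numAncestors_lt (Walk.single e hep het)
    have hpT : p ∉ T := fun h =>
      hp_erase (Finset.mem_erase.2 ⟨fun h' => hpt.ne (h' ▸ rfl), h⟩)
    have hpmem : p ∈ insert p (T.erase t) := Finset.mem_insert_self _ _
    obtain ⟨P, hP⟩ := ih _ (by rw [Finset.sum_insert hp_erase]; omega) (insert p (T.erase t))
      (by simp [hsT', hps.symm]) (by rw [Finset.card_insert_of_notMem hp_erase]; omega) rfl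
    refine (hP.restrict (Finset.subset_insert _ _)).exists_of_erase ht
      ((P p hpmem).concat e hep het) ?_ hnotMem_erase fun u hu => ?_
    · intro v hv
      rw [Walk.internals_concat, Set.mem_insert_iff, not_or]
      refine ⟨fun h => hpT (h ▸ hv), fun h => ?_⟩
      by_cases hvt : v = t
      · exact hnotMem _ hpt.le (hvt ▸ h)
      · exact hP.notMem_internals p hpmem v (by simp [hvt, hv]) h
    · have hup : u ≠ p := fun h => hp_erase (h ▸ hu)
      rw [Walk.internals_concat, Set.disjoint_insert_left]
      exact ⟨hP.notMem_internals u _ p hpmem, hP.disjoint_internals p hpmem u _ hup.symm⟩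
  · obtain ⟨e, hes, het⟩ := not_forall_not.1 hadj
    obtain ⟨P, hP⟩ := ih _ (by omega) (T.erase t) hsT' (by omega) rfl
    exact hP.exists_of_erase ht (Walk.single e hes het) (by simp) hnotMem_erase (by simp)

theorem Acyclic.hasIntDisjoint_of_isFan [Fintype V] [Fintype E] [DecidableEq V]
    (hG : G.Acyclic) {s t : V} {T : Finset V} {P : ∀ v ∈ T, G.Walk s v} (hP : IsFan T P)
    (hT : ∀ p ∈ T, p ≠ s ∧ ∃ e : E, G.tail e = p ∧ G.head e = t) :
    G.HasIntDisjoint s t ((G.directEdges s t).card + T.card) := by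
  choose hps e hep het using hT
  let W : G.directEdges s t ⊕ T → G.Walk s t := Sum.elim
    (fun f => Walk.single f.1 (mem_directEdges.1 f.2).1 (mem_directEdges.1 f.2).2)
    (fun p => (P p p.2).concat (e p p.2) (hep p p.2) (het p p.2))
  have hint : Pairwise fun i j => Disjoint (W i).internals (W j).internals := by
    rintro (f | p) (g | q) hne <;>
      simp only [W, Sum.elim_inl, Sum.elim_inr, Walk.internals_single, Set.empty_disjoint,
        Set.disjoint_empty]
    exact hP.disjoint_internals_concat p.2 q.2 (fun h => hne (congrArg Sum.inr (Subtype.ext h)))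
      _ _ _ _ _ _
  have hlast : Function.Injective fun i => (W i).lastEdge := by
    have hW : (fun i => (W i).lastEdge) =
        Sum.elim (fun f : G.directEdges s t => f.1) fun p : T => e p p.2 := by
      ext (f | p) <;> simp [W]
    rw [hW]
    refine Subtype.val_injective.sumElim (fun p q hpq => Subtype.ext ?_) fun f p hfp => ?_
    · rw [← hep p p.2, ← hep q q.2, hpq]
    · exact hps p p.2 (by rw [← hep p p.2, ← hfp, (mem_directEdges.1 f.2).1])
  simpa only [Fintype.card_sum, Fintype.card_coe] using hG.hasIntDisjoint W hint hlast

end Multigraph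

/-- In an acyclic multigraph in which every non-source vertex has
diversity at least `d`, every vertex `t ≠ s` (adjacent to `s` or not) admits
at least `d` pairwise internally-disjoint paths from `s` (parallel direct
edges counting as distinct internally-disjoint paths). -/
theorem stmt4 {V E : Type} [Fintype V] [Fintype E] [DecidableEq V]
    (G : Multigraph V E) (s : V) (hacyc : G.Acyclic) (d : ℕ)
    (hdiv : ∀ v : V, v ≠ s → d ≤ G.diversity s v)
    (t : V) (hts : t ≠ s) :
    G.HasIntDisjoint s t d := by
  have hdt := hdiv t hts
  rw [Multigraph.diversity_eq] at hdt
  obtain ⟨T, hTK, hTcard⟩ := Finset.exists_subset_card_eq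
    (s := G.nonSourceParents s t) (n := d - (G.directEdges s t).card) (by omega)
  have hT : ∀ p ∈ T, p ≠ s ∧ ∃ e : E, G.tail e = p ∧ G.head e = t :=
    fun p hp => Multigraph.mem_nonSourceParents.1 (hTK hp)
  obtain ⟨P, hP⟩ := hacyc.exists_isFan hdiv T (fun h => (hT s h).1 rfl) (by omega)
  exact (hacyc.hasIntDisjoint_of_isFan hP hT).mono (by omega)
end
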